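/- Let σ > 0, integer d ≥ 1, and positive reals r_11,…,r_nn with min_i r_ii ≥ 2σ·r(√(2π)/(2d)). Let γ = (∏_{i=1}^n r_ii)^{1/n}. Then ∏_{i=1}^n [1/(d+1) + (d/(d+1))·φ_σ(r_ii)] ≤ [1/(d+1) + (d/(d+1))·φ_σ(γ)]^n, with equality if and only if r_11 = ⋯ = r_nn = γ. -/

import Mathlib

/-!
Write `G y = ∫₀^y e^{-t²/2} dt` and `α = √(2π)/(2d)`. Then
`1/(d+1) + d/(d+1) φ_σ(ζ) = C (α + G(ζ/(2σ)))` with `C > 0`, so it suffices that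
`x ↦ log (α + G(eˣ/(2σ)))` is strictly concave for `x ≥ log (2σ r(α))`: equal-weight Jensen at
the points `log r_ii` then gives the inequality and its equality case. With `u = eˣ/(2σ)` the
second derivative is `u e^{-u²/2} f(u, α) / (α + G u)²`, and `f(·, α)` is strictly decreasing on
`[0, ∞)` (its derivative is `-2u (α + G u)`), hence negative beyond its zero `r(α)`.
-/

noncomputable def phi (σ ζ : ℝ) : ℝ :=
  (2 / Real.sqrt (2 * Real.pi)) * ∫ t in (0:ℝ)..(ζ / (2 * σ)), Real.exp (-t ^ 2 / 2)

noncomputable def f (ζ α : ℝ) : ℝ :=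
  (1 - ζ ^ 2) * (α + ∫ t in (0:ℝ)..ζ, Real.exp (-t ^ 2 / 2)) - ζ * Real.exp (-ζ ^ 2 / 2)

open Real Set Finset

section Jensen

variable {ι E : Type*} [Fintype ι] [AddCommGroup E] [Module ℝ E] {s : Set E} {g : E → ℝ}
  {p : ι → E}

theorem ConcaveOn.sum_le_card_mul_map_mean (hg : ConcaveOn ℝ s g) (hp : ∀ i, p i ∈ s) :
    ∑ i, g (p i) ≤ Fintype.card ι * g ((Fintype.card ι : ℝ)⁻¹ • ∑ i, p i) := by
  cases isEmpty_or_nonempty ι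
  · simp
  have hn : (0 : ℝ) < Fintype.card ι := by exact_mod_cast Fintype.card_pos
  have h := hg.le_map_sum (t := univ) (w := fun _ => (Fintype.card ι : ℝ)⁻¹)
    (fun _ _ => by positivity) (by simp [hn.ne']) (fun i _ => hp i)
  rw [← smul_sum, ← smul_sum, smul_eq_mul, inv_mul_le_iff₀ hn] at h
  exact h

theorem StrictConcaveOn.sum_eq_card_mul_map_mean_iff (hg : StrictConcaveOn ℝ s g)
    (hp : ∀ i, p i ∈ s) :
    ∑ i, g (p i) = Fintype.card ι * g ((Fintype.card ι : ℝ)⁻¹ • ∑ i, p i) ↔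
      ∀ i, p i = (Fintype.card ι : ℝ)⁻¹ • ∑ i, p i := by
  cases isEmpty_or_nonempty ι
  · simp
  have hn : (0 : ℝ) < Fintype.card ι := by exact_mod_cast Fintype.card_pos
  have h := hg.map_sum_eq_iff (t := univ) (w := fun _ => (Fintype.card ι : ℝ)⁻¹)
    (fun _ _ => by positivity) (by simp [hn.ne']) (fun i _ => hp i)
  rw [← smul_sum, ← smul_sum, smul_eq_mul, eq_comm, inv_mul_eq_iff_eq_mul₀ hn.ne'] at h
  simpa using h

end Jensen

section GeomMean

variable {ι : Type*} [Fintype ι] {ψ : ℝ → ℝ} {a : ℝ} {r : ι → ℝ}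

theorem rpow_inv_card_prod_eq_exp_mean_log (hr : ∀ i, 0 < r i) :
    (∏ i, r i) ^ (1 / (Fintype.card ι : ℝ)) =
      exp ((Fintype.card ι : ℝ)⁻¹ • ∑ i, log (r i)) := by
  have hprod : 0 < ∏ i, r i := prod_pos fun i _ => hr i
  rw [← log_prod fun i _ => (hr i).ne', smul_eq_mul, ← one_div, ← log_rpow hprod,
    exp_log (rpow_pos_of_pos hprod _)]

theorem prod_eq_exp_sum_log_comp_exp (hψ : ∀ x, 0 < x → 0 < ψ x) (hr : ∀ i, 0 < r i) :
    ∏ i, ψ (r i) = exp (∑ i, log (ψ (exp (log (r i))))) := by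
  simp only [exp_sum, exp_log (hr _), exp_log (hψ _ (hr _))]

variable (ha : 0 < a) (hψ : ∀ x, 0 < x → 0 < ψ x)
  (hconc : StrictConcaveOn ℝ (Ici (log a)) fun x => log (ψ (exp x))) (hr : ∀ i, a ≤ r i)
include ha hψ hconc hr

theorem prod_le_pow_map_geomMean :
    ∏ i, ψ (r i) ≤ ψ ((∏ i, r i) ^ (1 / (Fintype.card ι : ℝ))) ^ Fintype.card ι := by
  have hr₀ i : 0 < r i := ha.trans_le (hr i)
  rw [prod_eq_exp_sum_log_comp_exp hψ hr₀, rpow_inv_card_prod_eq_exp_mean_log hr₀,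
    ← exp_log (hψ _ (exp_pos _)), ← exp_nat_mul, exp_le_exp]
  exact hconc.concaveOn.sum_le_card_mul_map_mean fun i => log_le_log ha (hr i)

theorem prod_eq_pow_map_geomMean_iff :
    ∏ i, ψ (r i) = ψ ((∏ i, r i) ^ (1 / (Fintype.card ι : ℝ))) ^ Fintype.card ι ↔
      ∀ i, r i = (∏ i, r i) ^ (1 / (Fintype.card ι : ℝ)) := by
  have hr₀ i : 0 < r i := ha.trans_le (hr i)
  rw [prod_eq_exp_sum_log_comp_exp hψ hr₀, rpow_inv_card_prod_eq_exp_mean_log hr₀,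
    ← exp_log (hψ _ (exp_pos _)), ← exp_nat_mul, exp_eq_exp,
    hconc.sum_eq_card_mul_map_mean_iff fun i => log_le_log ha (hr i)]
  refine forall_congr' fun i => ?_
  rw [← log_injOn_pos.eq_iff (hr₀ i) (exp_pos _), log_exp]

end GeomMean

noncomputable def gaussIntegral (y : ℝ) : ℝ := ∫ t in (0 : ℝ)..y, exp (-t ^ 2 / 2)

theorem hasDerivAt_gaussIntegral (y : ℝ) : HasDerivAt gaussIntegral (exp (-y ^ 2 / 2)) y :=
  ((by fun_prop : Continuous fun t : ℝ => exp (-t ^ 2 / 2)).integral_hasStrictDerivAt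
    0 y).hasDerivAt

theorem gaussIntegral_pos {y : ℝ} (hy : 0 < y) : 0 < gaussIntegral y :=
  intervalIntegral.intervalIntegral_pos_of_pos_on
    ((by fun_prop : Continuous fun t : ℝ => exp (-t ^ 2 / 2)).intervalIntegrable 0 y)
    (fun _ _ => exp_pos _) hy

theorem hasDerivAt_mul_exp_neg_sq_div_two (z : ℝ) :
    HasDerivAt (fun z => z * exp (-z ^ 2 / 2)) ((1 - z ^ 2) * exp (-z ^ 2 / 2)) z := by
  have h : HasDerivAt (fun z : ℝ => -z ^ 2 / 2) (-z) z :=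
    ((hasDerivAt_pow 2 z).neg.div_const 2).congr_deriv (by ring)
  exact ((hasDerivAt_id z).mul h.exp).congr_deriv (by simp only [id]; ring)

theorem hasDerivAt_f (α ζ : ℝ) :
    HasDerivAt (fun z => f z α) (-2 * ζ * (α + gaussIntegral ζ)) ζ := by
  have h := (((hasDerivAt_pow 2 ζ).const_sub 1).mul
    ((hasDerivAt_gaussIntegral ζ).const_add α)).sub (hasDerivAt_mul_exp_neg_sq_div_two ζ)
  exact h.congr_deriv (by ring)

theorem strictAntiOn_f {α : ℝ} (hα : 0 ≤ α) : StrictAntiOn (fun z => f z α) (Ici 0) := by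
  refine strictAntiOn_of_deriv_neg (convex_Ici 0)
    (fun x _ => (hasDerivAt_f α x).continuousAt.continuousWithinAt) fun x hx => ?_
  rw [interior_Ici, Set.mem_Ioi] at hx
  rw [(hasDerivAt_f α x).deriv]
  nlinarith [gaussIntegral_pos hx]

noncomputable def gaussSlope (α u : ℝ) : ℝ := u * exp (-u ^ 2 / 2) / (α + gaussIntegral u)

theorem hasDerivAt_gaussSlope {α u : ℝ} (h : α + gaussIntegral u ≠ 0) :
    HasDerivAt (gaussSlope α) (exp (-u ^ 2 / 2) * f u α / (α + gaussIntegral u) ^ 2) u := by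
  refine ((hasDerivAt_mul_exp_neg_sq_div_two u).div
    ((hasDerivAt_gaussIntegral u).const_add α) h).congr_deriv ?_
  rw [show f u α = (1 - u ^ 2) * (α + gaussIntegral u) - u * exp (-u ^ 2 / 2) from rfl]
  ring

noncomputable def logProfile (σ α x : ℝ) : ℝ := log (α + gaussIntegral (exp x / (2 * σ)))

section LogProfile

variable {σ α : ℝ} (hσ : 0 < σ) (hα : 0 ≤ α)
include hσ hα

theorem add_gaussIntegral_exp_div_pos (x : ℝ) : 0 < α + gaussIntegral (exp x / (2 * σ)) := by
  have := gaussIntegral_pos (by positivity : 0 < exp x / (2 * σ))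
  linarith

theorem hasDerivAt_logProfile (x : ℝ) :
    HasDerivAt (logProfile σ α) (gaussSlope α (exp x / (2 * σ))) x := by
  have hu := (hasDerivAt_exp x).div_const (2 * σ)
  refine ((((hasDerivAt_gaussIntegral _).comp x hu).const_add α).log
    (add_gaussIntegral_exp_div_pos hσ hα x).ne').congr_deriv ?_
  simp only [gaussSlope, Function.comp_apply]
  ring

theorem strictConcaveOn_logProfile {ra : ℝ} (hra : 0 < ra) (hz : f ra α = 0) :
    StrictConcaveOn ℝ (Ici (log (2 * σ * ra))) (logProfile σ α) := by
  refine strictConcaveOn_of_deriv2_neg (convex_Ici _)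
    (fun x _ => (hasDerivAt_logProfile hσ hα x).continuousAt.continuousWithinAt) fun x hx => ?_
  rw [interior_Ici, Set.mem_Ioi, log_lt_iff_lt_exp (by positivity),
    ← lt_div_iff₀' (by positivity)] at hx
  set u := exp x / (2 * σ)
  have hderiv : deriv (logProfile σ α) = fun x => gaussSlope α (exp x / (2 * σ)) :=
    funext fun x => (hasDerivAt_logProfile hσ hα x).deriv
  have h2 := ((hasDerivAt_gaussSlope (add_gaussIntegral_exp_div_pos hσ hα x).ne').comp x
    ((hasDerivAt_exp x).div_const (2 * σ)))
  rw [Function.comp_def] at h2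
  rw [Function.iterate_succ_apply, Function.iterate_one, hderiv, h2.deriv]
  have hf : f u α < 0 := by
    simpa [hz] using strictAntiOn_f hα hra.le (hra.le.trans hx.le) hx
  have hu : 0 < u := by positivity
  have hP := add_gaussIntegral_exp_div_pos hσ hα x
  exact mul_neg_of_neg_of_pos (div_neg_of_neg_of_pos
    (mul_neg_of_pos_of_neg (exp_pos _) hf) (by positivity)) hu

end LogProfile

section AffinePhi

variable {d σ : ℝ} (hd : 0 < d)
include hd

theorem one_div_add_mul_phi_eq (ζ : ℝ) :
    1 / (d + 1) + d / (d + 1) * phi σ ζ =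
      d / (d + 1) * (2 / √(2 * π)) *
        (√(2 * π) / (2 * d) + gaussIntegral (ζ / (2 * σ))) := by
  rw [phi, ← gaussIntegral]
  field_simp

variable (hσ : 0 < σ)
include hσ

theorem one_div_add_mul_phi_pos {ζ : ℝ} (hζ : 0 < ζ) :
    0 < 1 / (d + 1) + d / (d + 1) * phi σ ζ := by
  rw [one_div_add_mul_phi_eq hd]
  have := gaussIntegral_pos (by positivity : 0 < ζ / (2 * σ))
  positivity

theorem log_one_div_add_mul_phi_exp (x : ℝ) :
    log (1 / (d + 1) + d / (d + 1) * phi σ (exp x)) =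
      logProfile σ (√(2 * π) / (2 * d)) x + log (d / (d + 1) * (2 / √(2 * π))) := by
  rw [one_div_add_mul_phi_eq hd, logProfile, log_mul (by positivity)
    (add_gaussIntegral_exp_div_pos hσ (by positivity) x).ne', add_comm]

end AffinePhi

theorem stmt16_general (n : ℕ) (σ : ℝ) (hσ : 0 < σ) (d : ℕ) (hd : 1 ≤ d)
    (r : Fin n → ℝ)
    (rα : ℝ) (hr0 : 0 ≤ rα) (hrz : f rα (Real.sqrt (2 * Real.pi) / (2 * d)) = 0)
    (hmin : ∀ i, 2 * σ * rα ≤ r i) :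
    ∏ i, (1 / ((d : ℝ) + 1) + (d : ℝ) / ((d : ℝ) + 1) * phi σ (r i)) ≤
      (1 / ((d : ℝ) + 1) +
        (d : ℝ) / ((d : ℝ) + 1) * phi σ ((∏ i, r i) ^ ((1 : ℝ) / n))) ^ n ∧
    ((∏ i, (1 / ((d : ℝ) + 1) + (d : ℝ) / ((d : ℝ) + 1) * phi σ (r i)) =
        (1 / ((d : ℝ) + 1) +
          (d : ℝ) / ((d : ℝ) + 1) * phi σ ((∏ i, r i) ^ ((1 : ℝ) / n))) ^ n) ↔
      ∀ i, r i = (∏ i, r i) ^ ((1 : ℝ) / n)) := by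
  have hd₀ : (0 : ℝ) < d := by exact_mod_cast hd
  have hα : 0 < √(2 * π) / (2 * d) := by positivity
  have hrα : 0 < rα := hr0.lt_of_ne <| by
    rintro rfl
    -- `f 0 α = α`
    exact hα.ne' (by simpa [f] using hrz)
  have hconc : StrictConcaveOn ℝ (Ici (log (2 * σ * rα)))
      fun x => log (1 / ((d : ℝ) + 1) + d / (d + 1) * phi σ (exp x)) := by
    refine ((strictConcaveOn_logProfile hσ hα.le hrα hrz).add_const
      (log ((d : ℝ) / (d + 1) * (2 / √(2 * π))))).congr fun x _ => ?_
    exact (log_one_div_add_mul_phi_exp hd₀ hσ x).symm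
  have hψ x (hx : 0 < x) := one_div_add_mul_phi_pos hd₀ hσ hx
  have ha : 0 < 2 * σ * rα := by positivity
  have hle := prod_le_pow_map_geomMean ha hψ hconc hmin
  have heq := prod_eq_pow_map_geomMean_iff ha hψ hconc hmin
  rw [Fintype.card_fin] at hle heq
  exact ⟨hle, heq⟩

theorem stmt16 (n : ℕ) (hn : 0 < n) (σ : ℝ) (hσ : 0 < σ) (d : ℕ) (hd : 1 ≤ d)
    (r : Fin n → ℝ) (hr : ∀ i, 0 < r i)
    (rα : ℝ) (hr0 : 0 ≤ rα) (hrz : f rα (Real.sqrt (2 * Real.pi) / (2 * d)) = 0)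
    (hmin : ∀ i, 2 * σ * rα ≤ r i) :
    ∏ i, (1 / ((d : ℝ) + 1) + (d : ℝ) / ((d : ℝ) + 1) * phi σ (r i)) ≤
      (1 / ((d : ℝ) + 1) +
        (d : ℝ) / ((d : ℝ) + 1) * phi σ ((∏ i, r i) ^ ((1 : ℝ) / n))) ^ n ∧
    ((∏ i, (1 / ((d : ℝ) + 1) + (d : ℝ) / ((d : ℝ) + 1) * phi σ (r i)) =
        (1 / ((d : ℝ) + 1) +
          (d : ℝ) / ((d : ℝ) + 1) * phi σ ((∏ i, r i) ^ ((1 : ℝ) / n))) ^ n) ↔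
      ∀ i, r i = (∏ i, r i) ^ ((1 : ℝ) / n)) :=
  stmt16_general n σ hσ d hd r rα hr0 hrz hmin
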